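/- Consider the block problem minimize over d ∈ ℝᴷ of (1/2)‖r - Ad‖₂² + λ₁‖d₋₁‖₁ + λ₂‖Ad‖₂, where A has orthonormal columns (AᵀA = I). Let d̃ be the solution with λ₂ = 0, i.e., of (1/2)‖r - Ad‖₂² + λ₁‖d₋₁‖₁. Then the solution of the full problem is d̂ = max(1 - λ₂/‖Ad̃‖₂, 0)·d̃ (and d̂ = 0 if Ad̃ = 0). -/

import Mathlib

/-!
With `AᵀA = 1` the map `d ↦ A d` is an isometry, so up to an additive constant the block objective
is `½‖d - b‖² + λ₁‖d₋₁‖₁ + λ₂‖d‖` with `b = Aᵀ r`, and `d̃` is the proximal point of `f = λ₁‖·₋₁‖₁`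
at `b`. Since `f` is convex, `½‖· - b‖² + f` is `1`-strongly convex and therefore grows at least
like `½‖d - d̃‖²` away from its minimiser `d̃`; since `f` is moreover positively homogeneous, this
growth is exact along the ray through `d̃`. Hence for every `d`,
`½‖d - b‖² + f d + λ₂‖d‖ ≥ const + ½‖d - d̃‖² + λ₂‖d‖`, with equality at `d = c d̃` for `c ≥ 0`,
and the right-hand side is minimised by the block soft-thresholding `c = max(1 - λ₂/‖d̃‖, 0)`.
-/

open Set Filter Topology Matrix
open scoped RealInnerProductSpace

lemma UniformConvexOn.apply_add_le_of_isMinOn {E : Type*} [NormedAddCommGroup E]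
    [NormedSpace ℝ E] {s : Set E} {φ : ℝ → ℝ} {f : E → ℝ} {x₀ x : E}
    (hf : UniformConvexOn s φ f) (hmin : IsMinOn f s x₀) (hx₀ : x₀ ∈ s) (hx : x ∈ s) :
    f x₀ + φ ‖x - x₀‖ ≤ f x := by
  have hsegment : ∀ t ∈ Ioc (0 : ℝ) 1, f x₀ + (1 - t) * φ ‖x - x₀‖ ≤ f x := by
    rintro t ⟨ht₀, ht₁⟩
    have hconv := hf.2 hx₀ hx (sub_nonneg.2 ht₁) ht₀.le (sub_add_cancel 1 t)
    have hle := isMinOn_iff.1 hmin _ (hf.1 hx₀ hx (sub_nonneg.2 ht₁) ht₀.le (sub_add_cancel 1 t))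
    rw [norm_sub_rev, smul_eq_mul, smul_eq_mul] at hconv
    refine le_of_mul_le_mul_left ?_ ht₀
    nlinarith
  have hlim : Tendsto (fun t => f x₀ + (1 - t) * φ ‖x - x₀‖) (𝓝[>] 0)
      (𝓝 (f x₀ + φ ‖x - x₀‖)) := by
    refine ((Continuous.tendsto' (by fun_prop) 0 _ ?_).mono_left nhdsWithin_le_nhds)
    ring
  exact le_of_tendsto hlim (eventually_of_mem (Ioc_mem_nhdsGT one_pos) hsegment)

lemma ConvexOn.sum {𝕜 E β ι : Type*} [Semiring 𝕜] [PartialOrder 𝕜] [AddCommMonoid E]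
    [AddCommMonoid β] [PartialOrder β] [IsOrderedAddMonoid β] [SMul 𝕜 E] [Module 𝕜 β]
    [PosSMulMono 𝕜 β] {s : Set E} {f : ι → E → β} (t : Finset ι) (hs : Convex 𝕜 s)
    (hf : ∀ i ∈ t, ConvexOn 𝕜 s (f i)) : ConvexOn 𝕜 s fun x => ∑ i ∈ t, f i x := by
  classical
  induction t using Finset.induction_on with
  | empty => simpa using convexOn_const 0 hs
  | insert i t hi ih =>
    simp_rw [Finset.sum_insert hi]
    exact (hf i (Finset.mem_insert_self i t)).add
      (ih fun j hj => hf j (Finset.mem_insert_of_mem hj))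

section Prox

variable {E : Type*} [NormedAddCommGroup E]

noncomputable def proxObjective (f : E → ℝ) (b x : E) : ℝ := 1 / 2 * ‖x - b‖ ^ 2 + f x

lemma isMinOn_Ici_half_sq_sub_add_mul (N lam : ℝ) :
    IsMinOn (fun u => 1 / 2 * (u - N) ^ 2 + lam * u) (Ici 0) (max (N - lam) 0) := by
  refine isMinOn_iff.2 fun u (hu : 0 ≤ u) => ?_
  rcases le_total (N - lam) 0 with h | h
  · simp only [max_eq_right h]
    nlinarith
  · simp only [max_eq_left h]
    nlinarith [sq_nonneg (u - N + lam)]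

lemma isMinOn_proxObjective_mul_norm [NormedSpace ℝ E] {lam : ℝ} (hlam : 0 ≤ lam) (y : E) :
    IsMinOn (proxObjective (fun x => lam * ‖x‖) y) univ (max (1 - lam / ‖y‖) 0 • y) := by
  refine isMinOn_iff.2 fun x _ => ?_
  set c := max (1 - lam / ‖y‖) 0
  have hc : 0 ≤ c := le_max_right _ _
  have hcy : c * ‖y‖ = max (‖y‖ - lam) 0 := by
    rcases (norm_nonneg y).eq_or_lt with hy | hy
    · simp [← hy, hlam]
    · rw [max_mul_of_nonneg _ _ hy.le, sub_mul, div_mul_cancel₀ _ hy.ne', one_mul, zero_mul]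
  have hreverse : (‖x‖ - ‖y‖) ^ 2 ≤ ‖x - y‖ ^ 2 :=
    sq_le_sq' (abs_le.1 (abs_norm_sub_norm_le x y)).1 (abs_le.1 (abs_norm_sub_norm_le x y)).2
  have hscalar := isMinOn_iff.1 (isMinOn_Ici_half_sq_sub_add_mul ‖y‖ lam) ‖x‖
    (norm_nonneg x)
  simp only [← hcy] at hscalar
  have hcy' : ‖c • y - y‖ ^ 2 = (c * ‖y‖ - ‖y‖) ^ 2 := by
    rw [show c • y - y = (c - 1) • y by rw [sub_smul, one_smul], norm_smul, Real.norm_eq_abs,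
      mul_pow, sq_abs]
    ring
  simp only [proxObjective, norm_smul, Real.norm_of_nonneg hc, hcy'] at hscalar ⊢
  linarith

variable [InnerProductSpace ℝ E] {f : E → ℝ} {b x₀ : E}

lemma strongConvexOn_proxObjective (hf : ConvexOn ℝ univ f) (b : E) :
    StrongConvexOn univ 1 (proxObjective f b) := by
  have hlin : ConcaveOn ℝ univ fun x => ⟪b, x⟫ :=
    (innerSL ℝ b).toLinearMap.concaveOn convex_univ
  rw [strongConvexOn_iff_convex]
  refine ((hf.sub hlin).add_const (1 / 2 * ‖b‖ ^ 2)).congr fun x _ => ?_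
  simp only [proxObjective, norm_sub_sq_real, real_inner_comm b x, Pi.add_apply, Pi.sub_apply]
  ring

lemma proxObjective_add_le_of_isMinOn (hf : ConvexOn ℝ univ f)
    (hmin : IsMinOn (proxObjective f b) univ x₀) (x : E) :
    proxObjective f b x₀ + 1 / 2 * ‖x - x₀‖ ^ 2 ≤ proxObjective f b x :=
  (strongConvexOn_proxObjective hf b).apply_add_le_of_isMinOn hmin trivial trivial

lemma proxObjective_smul_of_isMinOn (hf : ConvexOn ℝ univ f)
    (hf_smul : ∀ s : ℝ, 0 ≤ s → ∀ x, f (s • x) = s * f x)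
    (hmin : IsMinOn (proxObjective f b) univ x₀) {s : ℝ} (hs : 0 ≤ s) :
    proxObjective f b (s • x₀) = proxObjective f b x₀ + 1 / 2 * ‖s • x₀ - x₀‖ ^ 2 := by
  have hray : ∀ s : ℝ, 0 ≤ s → proxObjective f b (s • x₀) =
      1 / 2 * s ^ 2 * ‖x₀‖ ^ 2 + s * (f x₀ - ⟪x₀, b⟫) + 1 / 2 * ‖b‖ ^ 2 := by
    intro s hs
    rw [proxObjective, hf_smul s hs, norm_sub_sq_real, norm_smul, real_inner_smul_left,
      Real.norm_of_nonneg hs]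
    ring
  have hdist : ∀ s : ℝ, ‖s • x₀ - x₀‖ ^ 2 = (s - 1) ^ 2 * ‖x₀‖ ^ 2 := fun s => by
    rw [show s • x₀ - x₀ = (s - 1) • x₀ by rw [sub_smul, one_smul], norm_smul,
      Real.norm_eq_abs, mul_pow, sq_abs]
  have h₁ := hray 1 zero_le_one
  rw [one_smul] at h₁
  -- the quadratic growth at the points `0` and `2 • x₀` of the ray bounds the slope both ways
  have hslope : f x₀ - ⟪x₀, b⟫ = -‖x₀‖ ^ 2 := by
    have h₀ := proxObjective_add_le_of_isMinOn hf hmin ((0 : ℝ) • x₀)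
    have h₂ := proxObjective_add_le_of_isMinOn hf hmin ((2 : ℝ) • x₀)
    rw [hray 0 le_rfl, hdist, h₁] at h₀
    rw [hray 2 zero_le_two, hdist, h₁] at h₂
    linarith
  rw [hray s hs, hdist, h₁, hslope]
  ring

theorem isMinOn_proxObjective_add_mul_norm (hf : ConvexOn ℝ univ f)
    (hf_smul : ∀ s : ℝ, 0 ≤ s → ∀ x, f (s • x) = s * f x)
    (hmin : IsMinOn (proxObjective f b) univ x₀) {lam : ℝ} (hlam : 0 ≤ lam) :
    IsMinOn (proxObjective (fun x => f x + lam * ‖x‖) b) univ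
      (max (1 - lam / ‖x₀‖) 0 • x₀) := by
  refine isMinOn_iff.2 fun x _ => ?_
  set c := max (1 - lam / ‖x₀‖) 0
  have hprox := isMinOn_iff.1 (isMinOn_proxObjective_mul_norm hlam x₀) x trivial
  simp only [proxObjective] at hprox
  calc proxObjective (fun x => f x + lam * ‖x‖) b (c • x₀)
      = proxObjective f b (c • x₀) + lam * ‖c • x₀‖ := by simp only [proxObjective]; ring
    _ = proxObjective f b x₀ + (1 / 2 * ‖c • x₀ - x₀‖ ^ 2 + lam * ‖c • x₀‖) := by
      rw [proxObjective_smul_of_isMinOn hf hf_smul hmin (le_max_right _ _)]; ring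
    _ ≤ proxObjective f b x₀ + (1 / 2 * ‖x - x₀‖ ^ 2 + lam * ‖x‖) := by gcongr
    _ ≤ proxObjective f b x + lam * ‖x‖ := by
      linarith [proxObjective_add_le_of_isMinOn hf hmin x]
    _ = proxObjective (fun x => f x + lam * ‖x‖) b x := by simp only [proxObjective]; ring

end Prox

section OrthonormalColumns

variable {m n : Type*} [Fintype m] [Fintype n] [DecidableEq n] {A : Matrix m n ℝ}

lemma Matrix.sum_sq_mulVec_of_transpose_mul_self_eq_one (hA : Aᵀ * A = 1) (d : n → ℝ) :
    ∑ i, (A *ᵥ d) i ^ 2 = ∑ j, d j ^ 2 := by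
  simp only [sq]
  change (A *ᵥ d) ⬝ᵥ (A *ᵥ d) = d ⬝ᵥ d
  rw [Matrix.dotProduct_mulVec, ← Matrix.mulVec_transpose, Matrix.mulVec_mulVec, hA,
    Matrix.one_mulVec]

lemma Matrix.sum_sq_sub_mulVec_of_transpose_mul_self_eq_one (hA : Aᵀ * A = 1) (r : m → ℝ)
    (d : n → ℝ) :
    ∑ i, (r i - (A *ᵥ d) i) ^ 2 =
      ∑ j, (d j - (r ᵥ* A) j) ^ 2 + (∑ i, r i ^ 2 - ∑ j, (r ᵥ* A) j ^ 2) := by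
  have hcross : ∑ i, r i * (A *ᵥ d) i = ∑ j, (r ᵥ* A) j * d j := Matrix.dotProduct_mulVec r A d
  have hnorm := Matrix.sum_sq_mulVec_of_transpose_mul_self_eq_one hA d
  simp only [sub_sq, Finset.sum_add_distrib, Finset.sum_sub_distrib, ← Finset.mul_sum,
    mul_assoc, hcross, hnorm]
  simp only [mul_comm (d _)]
  ring

end OrthonormalColumns

lemma EuclideanSpace.convexOn_sum_abs {ι : Type*} (s : Finset ι) :
    ConvexOn ℝ univ fun x : EuclideanSpace ℝ ι => ∑ i ∈ s, |x i| :=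
  ConvexOn.sum s convex_univ fun i _ =>
    convexOn_univ_norm.comp_linearMap (EuclideanSpace.proj i : _ →L[ℝ] ℝ).toLinearMap

lemma EuclideanSpace.sum_abs_smul {ι : Type*} (s : Finset ι) {c : ℝ} (hc : 0 ≤ c)
    (x : EuclideanSpace ℝ ι) : ∑ i ∈ s, |(c • x) i| = c * ∑ i ∈ s, |x i| := by
  simp only [WithLp.ofLp_smul, Pi.smul_apply, smul_eq_mul, abs_mul, abs_of_nonneg hc,
    Finset.mul_sum]

/-- Prox decomposition for the sparse additive waveMesh block problem: if `A` has
orthonormal columns, `d̃` solves the `λ₂ = 0` problem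
`(1/2)‖r - Ad‖₂² + λ₁‖d₋₁‖₁`, and `d̂ = max(1 - λ₂/‖Ad̃‖₂, 0) • d̃`
(with `d̂ = 0` if `Ad̃ = 0`), then `d̂` solves the full problem
`(1/2)‖r - Ad‖₂² + λ₁‖d₋₁‖₁ + λ₂‖Ad‖₂`. -/
theorem stmt_16 (n K : ℕ) [NeZero K] (A : Matrix (Fin n) (Fin K) ℝ)
    (hA : A.transpose * A = 1) (r : Fin n → ℝ)
    (lam₁ lam₂ : ℝ) (hlam₁ : 0 ≤ lam₁) (hlam₂ : 0 ≤ lam₂)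
    (pen : (Fin K → ℝ) → ℝ)
    (hpen : ∀ d, pen d = ∑ i ∈ Finset.univ.filter (fun i : Fin K => i ≠ 0), |d i|)
    (G₀ : (Fin K → ℝ) → ℝ)
    (hG₀ : ∀ d, G₀ d = (1 / 2) * ∑ i, (r i - (A.mulVec d) i) ^ 2 + lam₁ * pen d)
    (dtil : Fin K → ℝ) (hdtil : ∀ d, G₀ dtil ≤ G₀ d)
    (dhat : Fin K → ℝ)
    (hdhat : dhat =
      max (1 - lam₂ / Real.sqrt (∑ i, ((A.mulVec dtil) i) ^ 2)) 0 • dtil) :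
    (∀ d : Fin K → ℝ,
      G₀ dhat + lam₂ * Real.sqrt (∑ i, ((A.mulVec dhat) i) ^ 2)
        ≤ G₀ d + lam₂ * Real.sqrt (∑ i, ((A.mulVec d) i) ^ 2)) ∧
    (A.mulVec dtil = 0 → dhat = 0) := by
  let e : (Fin K → ℝ) → EuclideanSpace ℝ (Fin K) := WithLp.toLp 2
  let f : EuclideanSpace ℝ (Fin K) → ℝ := fun x => lam₁ * pen x
  have hnorm : ∀ d, √(∑ i, (A *ᵥ d) i ^ 2) = ‖e d‖ := fun d => by
    rw [Matrix.sum_sq_mulVec_of_transpose_mul_self_eq_one hA, EuclideanSpace.norm_eq]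
    simp [e]
  have hG₀e : ∀ d, G₀ d = proxObjective f (e (r ᵥ* A)) (e d) +
      1 / 2 * (∑ i, r i ^ 2 - ∑ j, (r ᵥ* A) j ^ 2) := fun d => by
    rw [hG₀, Matrix.sum_sq_sub_mulVec_of_transpose_mul_self_eq_one hA, proxObjective,
      ← WithLp.toLp_sub, EuclideanSpace.real_norm_sq_eq]
    simp only [Pi.sub_apply, e, f]
    ring
  have hf : ConvexOn ℝ univ f :=
    ((EuclideanSpace.convexOn_sum_abs {i | i ≠ 0}).smul hlam₁).congr fun x _ => by simp [f, hpen]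
  have hf_smul : ∀ s : ℝ, 0 ≤ s → ∀ x, f (s • x) = s * f x := fun s hs x => by
    simp only [f, hpen, EuclideanSpace.sum_abs_smul _ hs]
    ring
  have hmin : IsMinOn (proxObjective f (e (r ᵥ* A))) univ (e dtil) :=
    isMinOn_iff.2 fun x _ => by simpa [hG₀e] using hdtil x.ofLp
  have hhat := isMinOn_proxObjective_add_mul_norm hf hf_smul hmin hlam₂
  refine ⟨fun d => ?_, fun h => ?_⟩
  · have := isMinOn_iff.1 hhat (e d) trivial
    simp only [hdhat, hnorm, hG₀e, proxObjective, e, WithLp.toLp_smul] at this ⊢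
    linarith
  · have : dtil = 0 := by
      rw [← Matrix.one_mulVec dtil, ← hA, ← Matrix.mulVec_mulVec, h, Matrix.mulVec_zero]
    simp [hdhat, this]
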